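/- For a ranking r_l = (r_{l_1}, …, r_{l_m}) in R and indices i ≤ j, the matrix entry satisfies A^{r_l}[j,i] = 1 if and only if the pattern r_{l_i}r_{l_j} is a q-support pattern of R. -/

import Mathlib

open scoped Classical

namespace QSupport

variable {α : Type*}

/-- Pattern containment: `σx σy ⊑ r`, i.e. there are (0-based here) indices `i ≤ j`
with `r.get i = x` and `r.get j = y`.  When `x = y` this says `x` occurs in `r`. -/
def PatIn (x y : α) (r : List α) : Prop :=
  ∃ i j : Fin r.length, (i : ℕ) ≤ (j : ℕ) ∧ r.get i = x ∧ r.get j = y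

/-- The number of rankings in `R` containing the pattern `x y`. -/
noncomputable def supCount (x y : α) (R : List (List α)) : ℕ :=
  (Finset.univ.filter fun z : Fin R.length => PatIn x y (R.get z)).card

/-- `x y` is a `q`-support pattern of `R`. -/
def QSupp (x y : α) (R : List (List α)) (q : ℕ) : Prop := q ≤ supCount x y R

/-- Individual consensus score `κ₁^{r}(q)`. -/
noncomputable def kappa1 (R : List (List α)) (q : ℕ) (r : List α) : ℝ :=
  ((Finset.univ.filter fun i : Fin r.length => QSupp (r.get i) (r.get i) R q).card : ℝ)
    / (r.length : ℝ)

/-- Individual consensus score `κ₂^{r}(q)`. -/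
noncomputable def kappa2 (R : List (List α)) (q : ℕ) (r : List α) : ℝ :=
  ((Finset.univ.filter fun p : Fin r.length × Fin r.length =>
      (p.1 : ℕ) < (p.2 : ℕ) ∧ QSupp (r.get p.1) (r.get p.2) R q).card : ℝ)
    / ((r.length : ℝ) * ((r.length : ℝ) - 1) / 2)

/-- Overall consensus score `κ̄₁(q)`. -/
noncomputable def kappaBar1 (R : List (List α)) (q : ℕ) : ℝ :=
  (∑ l : Fin R.length, kappa1 R q (R.get l)) / (R.length : ℝ)

/-- Overall consensus score `κ̄₂(q)`. -/
noncomputable def kappaBar2 (R : List (List α)) (q : ℕ) : ℝ :=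
  (∑ l : Fin R.length, kappa2 R q (R.get l)) / (R.length : ℝ)

/-- Position function `π(σ, r)`: 1-based position of `σ` in `r`, or `0` if absent. -/
noncomputable def posFn [DecidableEq α] (σ : α) (r : List α) : ℕ :=
  if σ ∈ r then r.idxOf σ + 1 else 0

/-- Heaviside function `H`. -/
def Hv (x : ℤ) : ℕ := if 0 < x then 1 else 0

/-- The counting function `f(r_{l_i}, r_{l_j})` of Theorem 1. -/
noncomputable def fCount [DecidableEq α] (R : List (List α)) (x y : α) : ℕ :=
  if x = y then ∑ z : Fin R.length, Hv ((posFn x (R.get z) : ℤ))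
  else ∑ z : Fin R.length,
    Hv ((posFn y (R.get z) : ℤ) - (posFn x (R.get z) : ℤ)) * Hv ((posFn x (R.get z) : ℤ))

/-- The matrix `A^{r}` of Theorem 1 (entry `A[j, i]`). -/
noncomputable def Amat [DecidableEq α] (R : List (List α)) (q : ℕ) (r : List α) :
    Matrix (Fin r.length) (Fin r.length) ℝ :=
  Matrix.of fun j i =>
    if (i : ℕ) ≤ (j : ℕ) ∧ q ≤ fCount R (r.get i) (r.get j) then 1 else 0

/-- Average position `π̄(σ)` of an item over the rankings containing it. -/
noncomputable def avgPos [DecidableEq α] (R : List (List α)) (σ : α) : ℝ :=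
  (∑ z ∈ Finset.univ.filter (fun z : Fin R.length => σ ∈ R.get z),
      (posFn σ (R.get z) : ℝ)) /
    ((Finset.univ.filter fun z : Fin R.length => σ ∈ R.get z).card : ℝ)

/-- Position deviation `h(σ, r)`. -/
noncomputable def hDev [DecidableEq α] (R : List (List α)) (σ : α) (r : List α) : ℝ :=
  |(posFn σ r : ℝ) - avgPos R σ|

/-- Position gap `ω(x, y, r)`. -/
noncomputable def gap [DecidableEq α] (x y : α) (r : List α) : ℝ :=
  (posFn y r : ℝ) - (posFn x r : ℝ)

/-- Average position gap `ω̄(x, y)` over the rankings containing the pattern `x y`. -/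
noncomputable def avgGap [DecidableEq α] (R : List (List α)) (x y : α) : ℝ :=
  (∑ z ∈ Finset.univ.filter (fun z : Fin R.length => PatIn x y (R.get z)),
      gap x y (R.get z)) / (supCount x y R : ℝ)

/-- Gap deviation `d(x, y, r)`. -/
noncomputable def dDev [DecidableEq α] (R : List (List α)) (x y : α) (r : List α) : ℝ :=
  |gap x y r - avgGap R x y|

/-- Weighted individual consensus score `κ₁^{r}(q; γ)`. -/
noncomputable def kappa1W [DecidableEq α] (R : List (List α)) (q : ℕ) (r : List α)
    (γ : ℝ) : ℝ :=
  (∑ i ∈ Finset.univ.filter (fun i : Fin r.length => QSupp (r.get i) (r.get i) R q),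
      γ ^ hDev R (r.get i) r) / (r.length : ℝ)

/-- Weighted individual consensus score `κ₂^{r}(q; λ)`. -/
noncomputable def kappa2W [DecidableEq α] (R : List (List α)) (q : ℕ) (r : List α)
    (lam : ℝ) : ℝ :=
  (∑ p ∈ Finset.univ.filter (fun p : Fin r.length × Fin r.length =>
      (p.1 : ℕ) < (p.2 : ℕ) ∧ QSupp (r.get p.1) (r.get p.2) R q),
      lam ^ dDev R (r.get p.1) (r.get p.2) r) /
    ((r.length : ℝ) * ((r.length : ℝ) - 1) / 2)

end QSupport

/-!
In a duplicate-free ranking `l`, `H(π(x, l))` is the indicator of `x ∈ l`, and for `x ≠ y` the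
product `H(π(y, l) - π(x, l)) · H(π(x, l))` is the indicator of `x` standing strictly before `y`.
Both are the indicator of the pattern `x y ⊑ l`, so `f(x, y)` is the support count of `x y` and
the threshold `f ≥ q` defining `A^{r_l}` is exactly `x y ⊑_q R`.
-/

namespace QSupport

theorem patIn_self_iff {α : Type*} (x : α) (r : List α) : PatIn x x r ↔ x ∈ r := by
  constructor
  · rintro ⟨i, -, -, rfl, -⟩
    exact r.get_mem i
  · intro hx
    obtain ⟨i, rfl⟩ := List.get_of_mem hx
    exact ⟨i, i, le_rfl, rfl, rfl⟩

theorem patIn_iff_idxOf_lt {α : Type*} [DecidableEq α] {x y : α} (hxy : x ≠ y) {r : List α}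
    (hr : r.Nodup) : PatIn x y r ↔ x ∈ r ∧ y ∈ r ∧ r.idxOf x < r.idxOf y := by
  constructor
  · rintro ⟨i, j, hij, rfl, rfl⟩
    have hne : (i : ℕ) ≠ j := fun h => hxy (congrArg r.get (Fin.ext h))
    rw [List.get_idxOf hr, List.get_idxOf hr]
    exact ⟨r.get_mem i, r.get_mem j, lt_of_le_of_ne hij hne⟩
  · rintro ⟨hx, hy, hlt⟩
    exact ⟨⟨r.idxOf x, List.idxOf_lt_length_iff.2 hx⟩, ⟨r.idxOf y, List.idxOf_lt_length_iff.2 hy⟩,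
      hlt.le, List.idxOf_get _, List.idxOf_get _⟩

section Heaviside

variable {α : Type*} [DecidableEq α]

theorem Hv_posFn (x : α) (l : List α) : Hv (posFn x l) = if x ∈ l then 1 else 0 := by
  unfold Hv posFn
  split_ifs <;> omega

theorem Hv_posFn_sub_mul_Hv_posFn (x y : α) (l : List α) :
    Hv ((posFn y l : ℤ) - posFn x l) * Hv (posFn x l) =
      if x ∈ l ∧ y ∈ l ∧ l.idxOf x < l.idxOf y then 1 else 0 := by
  unfold Hv posFn
  split_ifs <;> simp_all; omega

end Heaviside

theorem fCount_eq_supCount {α : Type*} [DecidableEq α] {R : List (List α)}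
    (hR : ∀ r ∈ R, r.Nodup) (x y : α) : fCount R x y = supCount x y R := by
  rw [fCount, supCount, Finset.card_filter]
  split_ifs with hxy
  · subst hxy
    simp only [Hv_posFn, patIn_self_iff]
  · refine Finset.sum_congr rfl fun z _ => ?_
    rw [Hv_posFn_sub_mul_Hv_posFn]
    exact if_congr (patIn_iff_idxOf_lt hxy (hR _ (R.get_mem z))).symm rfl rfl

end QSupport

theorem Amat_entry_eq_one_iff_general {α : Type*} [DecidableEq α] (R : List (List α)) (q : ℕ)
    (hnodup : ∀ r' ∈ R, r'.Nodup)
    (r : List α) (i j : Fin r.length) (hij : (i : ℕ) ≤ (j : ℕ)) :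
    QSupport.Amat R q r j i = 1 ↔ QSupport.QSupp (r.get i) (r.get j) R q := by
  rw [QSupport.Amat, Matrix.of_apply, QSupport.fCount_eq_supCount hnodup, QSupport.QSupp]
  simp [hij]

/-- for `i ≤ j`, the matrix entry `A^{r_l}[j, i] = 1` iff the pattern
`r_{l_i} r_{l_j}` is a `q`-support pattern of `R`. -/
theorem Amat_entry_eq_one_iff {α : Type*} [DecidableEq α] (R : List (List α)) (q : ℕ)
    (hN : 0 < R.length) (hq : 0 < q) (hqN : q ≤ R.length)
    (hnodup : ∀ r' ∈ R, r'.Nodup)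
    (r : List α) (hr : r ∈ R) (i j : Fin r.length) (hij : (i : ℕ) ≤ (j : ℕ)) :
    QSupport.Amat R q r j i = 1 ↔ QSupport.QSupp (r.get i) (r.get j) R q :=
  Amat_entry_eq_one_iff_general R q hnodup r i j hij
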